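/- arXiv:1807.05139 — 3 statements merged into one kernel-verified Lean document; each statement's English description precedes it below -/
import Mathlib

section
/- For any real u ≥ 0, odd k = 2r+1 with r ≥ 1, positive integer m, and real ε, if for all i with 0 ≤ i < r we have A(i) - A(i+r+1 mod k) ≤ -m(r-i)u + ε, and for all i with r ≤ i < k we have A(i) - A(i-r) ≤ -m(i-r)u + ε, where A : ZMod k → ℝ, then ε ≥ (1/4)·u·m·(k - 1/k). -/
lemma sum_range_zmod {k : ℕ} [NeZero k] (f : ZMod k → ℝ) :
    ∑ i ∈ Finset.range k, f (i : ZMod k) = ∑ x : ZMod k, f x := by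
  rw [← Fin.sum_univ_eq_sum_range (fun i => f (i : ZMod k)) k]
  apply Fintype.sum_bijective (fun i : Fin k => ((i : ℕ) : ZMod k))
  · rw [Fintype.bijective_iff_injective_and_card]
    constructor
    · intro a b hab
      have := congrArg ZMod.val hab
      rw [ZMod.val_cast_of_lt a.isLt, ZMod.val_cast_of_lt b.isLt] at this
      exact Fin.ext this
    · simp [ZMod.card]
  · intro x; rfl

theorem lower_bound_from_inequalities (u : ℝ) (hu : 0 ≤ u) (r : ℕ) (hr : 1 ≤ r)
    (k : ℕ) (hk : k = 2 * r + 1) (m : ℕ) (hm : 1 ≤ m) (ε : ℝ)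
    (A : ZMod k → ℝ)
    (h1 : ∀ i : ℕ, i < r →
      A (i : ZMod k) - A ((i + r + 1 : ℕ) : ZMod k) ≤ -(m : ℝ) * ((r : ℝ) - (i : ℝ)) * u + ε)
    (h2 : ∀ i : ℕ, r ≤ i → i < k →
      A (i : ZMod k) - A ((i - r : ℕ) : ZMod k) ≤ -(m : ℝ) * ((i : ℝ) - (r : ℝ)) * u + ε) :
    ε ≥ (1 / 4) * u * (m : ℝ) * ((k : ℝ) - 1 / (k : ℝ)) := by
  haveI : NeZero k := ⟨by omega⟩
  set c : ZMod k := ((r + 1 : ℕ) : ZMod k) with hc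
  have hpt : ∀ i ∈ Finset.range k,
      A (i : ZMod k) - A ((i : ZMod k) + c) ≤ -(m:ℝ) * |(r:ℝ) - (i:ℝ)| * u + ε := by
    intro i hi
    rw [Finset.mem_range] at hi
    rcases lt_or_ge i r with h | h
    · have hA := h1 i h
      have hcast : ((i + r + 1 : ℕ) : ZMod k) = (i : ZMod k) + c := by
        rw [hc]; push_cast; ring
      have habs : |(r:ℝ) - (i:ℝ)| = (r:ℝ) - (i:ℝ) := by
        apply abs_of_nonneg
        have : (i:ℝ) ≤ (r:ℝ) := by exact_mod_cast h.le
        linarith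
      rw [hcast] at hA
      rw [habs]; exact hA
    · have hA := h2 i h hi
      have hcast : ((i - r : ℕ) : ZMod k) = (i : ZMod k) + c := by
        have h0 : ((i - r : ℕ) : ZMod k) = (i : ZMod k) - (r : ZMod k) := by
          rw [Nat.cast_sub h]
        have hk0 : (r : ZMod k) + c = 0 := by
          rw [hc, ← Nat.cast_add, show r + (r + 1) = k by omega, ZMod.natCast_self]
        rw [h0]
        linear_combination -hk0
      have habs : |(r:ℝ) - (i:ℝ)| = (i:ℝ) - (r:ℝ) := by
        rw [abs_sub_comm]
        apply abs_of_nonneg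
        have : (r:ℝ) ≤ (i:ℝ) := by exact_mod_cast h
        linarith
      rw [hcast] at hA
      rw [habs]; exact hA
  have hsum := Finset.sum_le_sum hpt
  have htel : ∑ i ∈ Finset.range k, (A (i:ZMod k) - A ((i:ZMod k)+c)) = 0 := by
    have ha : ∑ i ∈ Finset.range k, A (i : ZMod k) = ∑ x : ZMod k, A x :=
      sum_range_zmod (fun x => A x)
    have hb : ∑ i ∈ Finset.range k, A ((i : ZMod k) + c) = ∑ x : ZMod k, A (x + c) :=
      sum_range_zmod (fun x => A (x + c))
    have hc' : ∑ x : ZMod k, A (x + c) = ∑ x : ZMod k, A x :=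
      Fintype.sum_equiv (Equiv.addRight c) (fun x => A (x + c)) A (fun x => rfl)
    rw [Finset.sum_sub_distrib, ha, hb, hc', sub_self]
  have habs : ∑ i ∈ Finset.range k, |(r:ℝ) - (i:ℝ)| = r * (r+1) := by
    rw [show k = (r+1) + r by omega, Finset.sum_range_add]
    have e1 : ∑ i ∈ Finset.range (r+1), |(r:ℝ) - (i:ℝ)| =
        ∑ i ∈ Finset.range (r+1), ((r:ℝ) - (i:ℝ)) := by
      apply Finset.sum_congr rfl
      intro i hi
      rw [Finset.mem_range] at hi
      apply abs_of_nonneg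
      have : (i:ℝ) ≤ (r:ℝ) := by exact_mod_cast Nat.lt_succ_iff.mp hi
      linarith
    have e2 : ∑ i ∈ Finset.range r, |(r:ℝ) - ((r+1+i : ℕ):ℝ)| =
        ∑ i ∈ Finset.range r, ((i:ℝ) + 1) := by
      apply Finset.sum_congr rfl
      intro i hi
      rw [show |(r:ℝ) - ((r+1+i : ℕ):ℝ)| = |-(((i:ℝ)+1))| by push_cast; ring_nf]
      rw [abs_neg, abs_of_nonneg (by positivity)]
    have gauss : ∀ n : ℕ, (∑ i ∈ Finset.range n, (i:ℝ)) * 2 = n * (n-1) := by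
      intro n
      have := Finset.sum_range_id_mul_two n
      have : ((∑ i ∈ Finset.range n, i) * 2 : ℕ) = (n * (n-1) : ℕ) := this
      rcases Nat.eq_zero_or_pos n with h | h
      · subst h; simp
      · have hn1 : ((n - 1 : ℕ) : ℝ) = (n:ℝ) - 1 := by
          rw [Nat.cast_sub h]; simp
        calc (∑ i ∈ Finset.range n, (i:ℝ)) * 2
            = (((∑ i ∈ Finset.range n, i) * 2 : ℕ) : ℝ) := by push_cast; ring
          _ = ((n * (n-1) : ℕ) : ℝ) := by rw [this]
          _ = n * ((n:ℝ)-1) := by push_cast [Nat.cast_sub h]; ring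
    rw [e1, e2, Finset.sum_sub_distrib, Finset.sum_add_distrib, Finset.sum_const,
        Finset.sum_const, Finset.card_range, Finset.card_range, nsmul_eq_mul, nsmul_eq_mul]
    have g1 := gauss (r+1)
    have g2 := gauss r
    push_cast at g1 g2 ⊢
    linarith [g1, g2]
  rw [htel] at hsum
  have hrhs : ∑ i ∈ Finset.range k, (-(m:ℝ) * |(r:ℝ) - (i:ℝ)| * u + ε)
      = -(m:ℝ) * u * ((r:ℝ) * (r+1)) + k * ε := by
    rw [Finset.sum_add_distrib, Finset.sum_const, Finset.card_range, nsmul_eq_mul]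
    congr 1
    rw [show (fun i : ℕ => -(m:ℝ) * |(r:ℝ) - (i:ℝ)| * u) = (fun i : ℕ => (-(m:ℝ) * u) * |(r:ℝ) - (i:ℝ)|) from funext fun i => by ring]
    rw [← Finset.mul_sum, habs]
  rw [hrhs] at hsum
  have hkpos : (0:ℝ) < (k:ℝ) := by exact_mod_cast (by omega : 0 < k)
  rw [ge_iff_le, show (1/4) * u * (m:ℝ) * ((k:ℝ) - 1/(k:ℝ)) = ((m:ℝ) * u * ((r:ℝ)*(r+1))) / k from by
    subst hk; push_cast; field_simp; ring, div_le_iff₀ hkpos]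
  nlinarith [hsum]
end

section
/- Define the delay function δ on directed edges of the k-cycle (k = 2r+1) by: the delay from node p to node p+1 (mod k) is 0 if 0 ≤ p < r and u if r ≤ p < k, and the delay from p+1 to p is u minus the forward delay. Then for every i with 0 ≤ i < k and every edge (p, p+1 mod k), the shifted delay δ(p, p+1) - W(i,p) + W(i, p+1 mod k) lies in the interval [0, u]. -/
set_option maxHeartbeats 2000000

noncomputable def W (r : ℕ) (u : ℝ) (i p : ℕ) : ℝ :=
  if i < r then
    if p ≤ i then 0
    else if p ≤ r then ((p : ℝ) - (i : ℝ)) * u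
    else if p ≤ r + i + 1 then ((r : ℝ) - (i : ℝ)) * u
    else (2 * (r : ℝ) - (p : ℝ) + 1) * u
  else
    if p ≤ i - r then (p : ℝ) * u
    else if p ≤ r then ((i : ℝ) - (r : ℝ)) * u
    else if p ≤ i then ((i : ℝ) - (p : ℝ)) * u
    else 0

/-- Forward delay on the edge from p to p+1 (mod k) in the ring. -/
noncomputable def delta (r : ℕ) (u : ℝ) (p : ℕ) : ℝ :=
  if p < r then 0 else u

theorem shifted_delays_admissible (r : ℕ) (hr : 1 ≤ r) (u : ℝ) (hu : 0 ≤ u)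
    (k : ℕ) (hk : k = 2 * r + 1) (i : ℕ) (hi : i < k) (p : ℕ) (hp : p < k) :
    delta r u p - W r u i p + W r u i ((p + 1) % k) ∈ Set.Icc (0 : ℝ) u := by
  subst hk
  simp only [Set.mem_Icc, W, delta]
  rcases Nat.lt_or_ge i r with hir | hir
  · rcases Nat.lt_or_ge (p + 1) (2 * r + 1) with h | h
    · rw [Nat.mod_eq_of_lt h]
      split_ifs <;>
        first
          | (exfalso; omega)
          | (constructor <;> rify at * <;> nlinarith [hu])
    · have hpk : p + 1 = 2 * r + 1 := by omega
      rw [hpk, Nat.mod_self]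
      split_ifs <;>
        first
          | (exfalso; omega)
          | (constructor <;> rify at * <;> nlinarith [hu])
  · have hcast : ((i - r : ℕ) : ℝ) = (i : ℝ) - (r : ℝ) := Nat.cast_sub hir
    rcases Nat.lt_or_ge (p + 1) (2 * r + 1) with h | h
    · rw [Nat.mod_eq_of_lt h]
      split_ifs <;>
        first
          | (exfalso; omega)
          | (constructor <;> rify at * <;> nlinarith [hu, hcast])
          | (have hp' : p = r := by omega
             have hi' : i = 2 * r := by omega
             subst hp' hi'
             constructor <;> (push_cast; nlinarith [hu]))
    · have hpk : p + 1 = 2 * r + 1 := by omega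
      rw [hpk, Nat.mod_self]
      split_ifs <;>
        first
          | (exfalso; omega)
          | (constructor <;> rify at * <;> nlinarith [hu, hcast])
end

section
/- If an algorithm achieves ε-synchronized clocks on the k-ary 1-toroid (ring) with uniform uncertainty u and odd k = 2r+1 ≥ 3, then, modeling adjusted clocks abstractly as a function A : ZMod k → ℝ with the property that for each i < r there is an admissible shifted execution forcing A(i) - A(i+r+1) ≤ -(r-i)u + ε and for each r ≤ i < k one forcing A(i) - A(i-r) ≤ -(i-r)u + ε, we conclude ε ≥ (u/4)(k - 1/k). -/
open Finset

lemma sum_cast_range (k : ℕ) [NeZero k] (f : ZMod k → ℝ) :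
    ∑ i ∈ Finset.range k, f (i : ZMod k) = ∑ x : ZMod k, f x := by
  apply Finset.sum_nbij' (fun i : ℕ => (i : ZMod k)) (fun x : ZMod k => x.val)
  · intro a _; exact Finset.mem_univ _
  · intro x _; exact Finset.mem_range.mpr (ZMod.val_lt x)
  · intro a ha; exact ZMod.val_cast_of_lt (Finset.mem_range.mp ha)
  · intro x _; exact ZMod.natCast_rightInverse x
  · intro a _; rfl

lemma gauss (n : ℕ) : 2 * ∑ i ∈ Finset.range n, (i : ℝ) = n * (n - 1) := by
  induction n with
  | zero => simp
  | succ m ih =>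
    rw [Finset.sum_range_succ]
    push_cast
    push_cast at ih
    nlinarith [ih]

theorem ring_lower_bound (u : ℝ) (hu : 0 ≤ u) (r : ℕ) (hr : 1 ≤ r)
    (k : ℕ) (hk : k = 2 * r + 1) (ε : ℝ) (A : ZMod k → ℝ)
    (h1 : ∀ i : ℕ, i < r →
      A (i : ZMod k) - A ((i + r + 1 : ℕ) : ZMod k) ≤ -((r : ℝ) - (i : ℝ)) * u + ε)
    (h2 : ∀ i : ℕ, r ≤ i → i < k →
      A (i : ZMod k) - A ((i - r : ℕ) : ZMod k) ≤ -((i : ℝ) - (r : ℝ)) * u + ε) :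
    ε ≥ (u / 4) * ((k : ℝ) - 1 / (k : ℝ)) := by
  haveI : NeZero k := ⟨by omega⟩
  have hmain : ∀ i ∈ Finset.range k,
      A (i : ZMod k) - A ((i : ZMod k) - (r : ZMod k)) ≤
        (if i < r then -((r : ℝ) - i) else -((i : ℝ) - r)) * u + ε := by
    intro i hi
    rw [Finset.mem_range] at hi
    by_cases h : i < r
    · have := h1 i h
      have hcast : ((i + r + 1 : ℕ) : ZMod k) = (i : ZMod k) - (r : ZMod k) := by
        have hk0 : ((k : ℕ) : ZMod k) = 0 := ZMod.natCast_self k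
        push_cast
        push_cast [hk] at hk0
        linear_combination hk0
      rw [hcast] at this
      simpa [h] using this
    · have hri : r ≤ i := Nat.le_of_not_lt h
      have := h2 i hri hi
      have hcast : ((i - r : ℕ) : ZMod k) = (i : ZMod k) - (r : ZMod k) := by
        push_cast [Nat.cast_sub hri]
        ring
      rw [hcast] at this
      simpa [h] using this
  have hsum := Finset.sum_le_sum hmain
  have hlhs : ∑ i ∈ Finset.range k,
      (A (i : ZMod k) - A ((i : ZMod k) - (r : ZMod k))) = 0 := by
    rw [Finset.sum_sub_distrib, sum_cast_range,
      sum_cast_range k (fun x => A (x - (r : ZMod k)))]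
    have hbij : ∑ x : ZMod k, A (x - (r : ZMod k)) = ∑ x : ZMod k, A x :=
      Fintype.sum_equiv (Equiv.subRight (r : ZMod k)) _ _ (fun x => rfl)
    rw [hbij]; ring
  rw [hlhs] at hsum
  have hrhs : ∑ i ∈ Finset.range k,
      ((if i < r then -((r : ℝ) - i) else -((i : ℝ) - r)) * u + ε)
      = -(u * (r * (r + 1))) + k * ε := by
    rw [Finset.sum_add_distrib, Finset.sum_const, Finset.card_range, ← Finset.sum_mul]
    have hsplit : Finset.range k = Finset.range r ∪ Finset.Ico r k := by
      ext i; simp [Finset.mem_range, Finset.mem_Ico]; omega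
    rw [hsplit, Finset.sum_union (by simp [Finset.disjoint_left]; omega)]
    have S1 : ∑ i ∈ Finset.range r, (if i < r then -((r : ℝ) - i) else -((i : ℝ) - r))
        = -(r * (r + 1) / 2) := by
      have hc1 : (∑ i ∈ Finset.range r, (if i < r then -((r : ℝ) - i) else -((i : ℝ) - r)))
          = ∑ i ∈ Finset.range r, ((i : ℝ) - r) :=
        Finset.sum_congr rfl (fun i hi => by rw [if_pos (Finset.mem_range.mp hi)]; ring)
      rw [hc1, Finset.sum_sub_distrib, Finset.sum_const, Finset.card_range, nsmul_eq_mul]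
      have := gauss r
      linarith
    have S2 : ∑ i ∈ Finset.Ico r k, (if i < r then -((r : ℝ) - i) else -((i : ℝ) - r))
        = -(r * (r + 1) / 2) := by
      have hc2 : (∑ i ∈ Finset.Ico r k, (if i < r then -((r : ℝ) - i) else -((i : ℝ) - r)))
          = ∑ i ∈ Finset.Ico r k, (-((i : ℝ) - r)) :=
        Finset.sum_congr rfl (fun i hi => by
          rw [if_neg (by have := (Finset.mem_Ico.mp hi).1; omega)])
      rw [hc2, Finset.sum_Ico_eq_sum_range]
      have hkr : k - r = r + 1 := by omega
      rw [hkr]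
      have he : (∑ i ∈ Finset.range (r + 1), (-(((r + i : ℕ) : ℝ) - r)))
          = ∑ i ∈ Finset.range (r + 1), (-(i : ℝ)) :=
        Finset.sum_congr rfl (fun i _ => by push_cast; ring)
      rw [he, Finset.sum_neg_distrib]
      have := gauss (r + 1)
      push_cast at this
      linarith
    rw [S1, S2]
    ring
  rw [hrhs] at hsum
  have hkr : (k : ℝ) = 2 * r + 1 := by push_cast [hk]; ring
  have hkpos : (0 : ℝ) < k := by rw [hkr]; positivity
  have heq : u / 4 * ((k : ℝ) - 1 / k) = u * (r * (r + 1)) / k := by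
    rw [hkr]; field_simp; ring
  rw [ge_iff_le, heq, div_le_iff₀ hkpos]
  nlinarith [hsum]
end
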